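/- arXiv:1109.1884 — 5 statements merged into one kernel-verified Lean document; each statement's English description precedes it below -/
import Mathlib

section
/- Let K have characteristic 0 and let I = I(P_1) ∩ … ∩ I(P_n) ⊆ K[x_0, …, x_N] be the radical ideal of a finite set of distinct points P_1, …, P_n ∈ P^N. Then for every integer j ≥ 1 one has I^{(j+1)} ⊆ M · I^{(j)}. -/
open MvPolynomial

noncomputable section

/-- The ideal generated by all homogeneous forms vanishing at the point with
coordinate vector `p`. -/
def homVanishingIdeal {K σ : Type*} [Field K] (p : σ → K) : Ideal (MvPolynomial σ K) :=
  Ideal.span {F : MvPolynomial σ K | (∃ d, F.IsHomogeneous d) ∧ MvPolynomial.eval p F = 0}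

/-- The `m`-th symbolic power of the radical ideal of the finite set of points
with coordinate vectors `P i`: the intersection of the `m`-th powers of the
ideals of the individual points. -/
def symbPow {K σ ι : Type*} [Field K] (P : ι → σ → K) (m : ℕ) : Ideal (MvPolynomial σ K) :=
  ⨅ i, homVanishingIdeal (P i) ^ m

/-- The irrelevant maximal ideal `M = (x_0, …, x_N)`. -/
def irrel (K σ : Type*) [Field K] : Ideal (MvPolynomial σ K) :=
  Ideal.span (Set.range (MvPolynomial.X : σ → MvPolynomial σ K))

/-- The coordinate vectors `P i` are nonzero and represent pairwise distinct
points of projective space (no two are proportional). -/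
def ProjectivelyDistinct {K σ ι : Type*} [Field K] (P : ι → σ → K) : Prop :=
  (∀ i, P i ≠ 0) ∧ Pairwise fun i j => ∀ c : K, P i ≠ c • P j

/-- `α(J)`: the least degree of a nonzero homogeneous element of `J`. -/
def idealAlpha {K σ : Type*} [Field K] (J : Ideal (MvPolynomial σ K)) : ℕ :=
  sInf {d : ℕ | ∃ F ∈ J, F ≠ 0 ∧ MvPolynomial.IsHomogeneous F d}

/-!
Both sides are homogeneous ideals, so it suffices to treat a form `F ∈ I^{(j+1)}` of degree `d`.
A derivation maps `J^(m+1)` into `J^m`, so every partial derivative `∂ᵢF` lies in `I^{(j)}`,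
and Euler's identity `d • F = ∑ xᵢ ∂ᵢF` puts `F` in `M · I^{(j)}` as soon as `d` is invertible,
which in characteristic `0` means `d ≠ 0`. A form of degree `0` is a constant, and a constant
vanishing at a point is `0`.
-/

attribute [local instance] MvPolynomial.gradedAlgebra

theorem Derivation.apply_mem_pow_of_mem_pow_succ {R A : Type*} [CommSemiring R] [CommSemiring A]
    [Algebra R A] (D : Derivation R A A) (J : Ideal A) :
    ∀ (m : ℕ), ∀ x ∈ J ^ (m + 1), D x ∈ J ^ m
  | 0, _, _ => by simp
  | m + 1, x, hx => by
    rw [pow_succ] at hx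
    refine Submodule.mul_induction_on hx (fun a ha b hb => ?_) (fun y z hy hz => ?_)
    · rw [D.leibniz, smul_eq_mul, smul_eq_mul, mul_comm b, pow_succ]
      exact add_mem (Ideal.mul_mem_right _ _ ha)
        (Ideal.mul_mem_mul (apply_mem_pow_of_mem_pow_succ D J m a ha) hb)
    · rw [map_add]
      exact add_mem hy hz

section Graded

variable {ι A σ : Type*} [DecidableEq ι] [AddMonoid ι] [CommSemiring A] [SetLike σ A]
  [AddSubmonoidClass σ A] {𝒜 : ι → σ} [GradedRing 𝒜]

theorem Ideal.IsHomogeneous.pow {J : Ideal A} (hJ : J.IsHomogeneous 𝒜) :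
    ∀ m : ℕ, (J ^ m).IsHomogeneous 𝒜
  | 0 => by simpa using Ideal.IsHomogeneous.top 𝒜
  | m + 1 => by rw [pow_succ]; exact (hJ.pow m).mul hJ

theorem Ideal.IsHomogeneous.le_of_forall_homogeneous {J I : Ideal A} (hJ : J.IsHomogeneous 𝒜)
    (h : ∀ i, ∀ x ∈ 𝒜 i, x ∈ J → x ∈ I) : J ≤ I := by
  classical
  intro x hx
  rw [← DirectSum.sum_support_decompose 𝒜 x]
  exact I.sum_mem fun i _ => h i _ (DirectSum.decompose 𝒜 x i).2 (hJ.mem_iff.mp hx i)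

end Graded

section Points

variable {K σ ι : Type*} [Field K]

theorem homVanishingIdeal_isHomogeneous (p : σ → K) :
    (homVanishingIdeal p).IsHomogeneous (homogeneousSubmodule σ K) :=
  Ideal.homogeneous_span _ _ fun _ ⟨⟨d, hd⟩, _⟩ => ⟨d, (mem_homogeneousSubmodule d _).mpr hd⟩

theorem symbPow_isHomogeneous (P : ι → σ → K) (m : ℕ) :
    (symbPow P m).IsHomogeneous (homogeneousSubmodule σ K) :=
  Ideal.IsHomogeneous.iInf fun i => (homVanishingIdeal_isHomogeneous (P i)).pow m

theorem eval_eq_zero_of_mem_homVanishingIdeal {p : σ → K} {F : MvPolynomial σ K}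
    (hF : F ∈ homVanishingIdeal p) : eval p F = 0 :=
  (Ideal.span_le (I := RingHom.ker (eval p))).mpr (fun _ hG => hG.2) hF

theorem eq_zero_of_isHomogeneous_zero_of_mem_homVanishingIdeal {p : σ → K}
    {F : MvPolynomial σ K} (hF : F.IsHomogeneous 0) (hFp : F ∈ homVanishingIdeal p) : F = 0 := by
  rw [← totalDegree_zero_iff_isHomogeneous, totalDegree_eq_zero_iff_eq_C] at hF
  rw [hF] at hFp ⊢
  simpa using eval_eq_zero_of_mem_homVanishingIdeal hFp

theorem pderiv_mem_symbPow [DecidableEq σ] {P : ι → σ → K} {m : ℕ} {F : MvPolynomial σ K}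
    (hF : F ∈ symbPow P (m + 1)) (i : σ) : pderiv i F ∈ symbPow P m :=
  Ideal.mem_iInf.mpr fun k =>
    (pderiv i).apply_mem_pow_of_mem_pow_succ _ m F (Ideal.mem_iInf.mp hF k)

theorem mem_irrel_mul_of_pderiv_mem [CharZero K] [Fintype σ] [DecidableEq σ]
    {J : Ideal (MvPolynomial σ K)} {F : MvPolynomial σ K} {d : ℕ} (hF : F.IsHomogeneous d)
    (hd : d ≠ 0) (hJ : ∀ i, pderiv i F ∈ J) : F ∈ irrel K σ * J := by
  have hdK : (d : K) ≠ 0 := Nat.cast_ne_zero.mpr hd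
  have hEuler : F = (d : K)⁻¹ • ∑ i, X i * pderiv i F := by
    rw [hF.sum_X_mul_pderiv, ← Nat.cast_smul_eq_nsmul K, inv_smul_smul₀ hdK]
  rw [hEuler, smul_eq_C_mul]
  exact Ideal.mul_mem_left _ _ <| Ideal.sum_mem _ fun i _ =>
    Ideal.mul_mem_mul (Ideal.subset_span ⟨i, rfl⟩) (hJ i)

end Points

theorem stmt0_general {K : Type*} [Field K] [CharZero K]
    {N n : ℕ} (hn : 1 ≤ n)
    (P : Fin n → (Fin (N + 1) → K))
    (j : ℕ) :
    symbPow P (j + 1) ≤ irrel K (Fin (N + 1)) * symbPow P j := by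
  refine (symbPow_isHomogeneous P (j + 1)).le_of_forall_homogeneous fun d F hF𝒜 hF => ?_
  have hFd : F.IsHomogeneous d := (mem_homogeneousSubmodule d F).mp hF𝒜
  rcases Nat.eq_zero_or_pos d with rfl | hd
  · have hF₀ : F ∈ homVanishingIdeal (P ⟨0, hn⟩) :=
      Ideal.pow_le_self j.succ_ne_zero (Ideal.mem_iInf.mp hF _)
    rw [eq_zero_of_isHomogeneous_zero_of_mem_homVanishingIdeal hFd hF₀]
    exact zero_mem _
  · exact mem_irrel_mul_of_pderiv_mem hFd hd.ne' fun i => pderiv_mem_symbPow hF i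

/-- In characteristic 0, for the radical ideal `I` of a finite set of
distinct points in `P^N`, `I^{(j+1)} ⊆ M · I^{(j)}` for all `j ≥ 1`. -/
theorem stmt0 {K : Type*} [Field K] [IsAlgClosed K] [CharZero K]
    {N n : ℕ} (hn : 1 ≤ n)
    (P : Fin n → (Fin (N + 1) → K)) (hP : ProjectivelyDistinct P)
    (j : ℕ) (hj : 1 ≤ j) :
    symbPow P (j + 1) ≤ irrel K (Fin (N + 1)) * symbPow P j :=
  stmt0_general hn P j
end
end

section
/- Let I ⊆ K[x_0, x_1, x_2] be the radical ideal of a finite set of distinct points in P^2 such that I^{(j+1)} ⊆ M · I^{(j)} and I^{(2j)} = (I^{(2)})^j for all j ≥ 1. Then I^{(t(m+1))} ⊆ M^t (I^{(m)})^t holds for all integers t ≥ 1 and m ≥ 1. -/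
open MvPolynomial

noncomputable section

/-- If `I^{(j+1)} ⊆ M·I^{(j)}` and `I^{(2j)} = (I^{(2)})^j` for all `j ≥ 1`,
then `I^{(t(m+1))} ⊆ M^t (I^{(m)})^t` for all `t, m ≥ 1`. -/
theorem stmt1 {K : Type*} [Field K] [IsAlgClosed K]
    {n : ℕ} (hn : 1 ≤ n)
    (P : Fin n → (Fin 3 → K)) (hP : ProjectivelyDistinct P)
    (h1 : ∀ j : ℕ, 1 ≤ j → symbPow P (j + 1) ≤ irrel K (Fin 3) * symbPow P j)
    (h2 : ∀ j : ℕ, 1 ≤ j → symbPow P (2 * j) = symbPow P 2 ^ j)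
    (t m : ℕ) (ht : 1 ≤ t) (hm : 1 ≤ m) :
    symbPow P (t * (m + 1)) ≤ irrel K (Fin 3) ^ t * symbPow P m ^ t := by
  set M := irrel K (Fin 3) with hM
  have key : ∀ k j : ℕ, 1 ≤ j → symbPow P (j + k) ≤ M ^ k * symbPow P j := by
    intro k
    induction k with
    | zero => intro j hj; simp
    | succ k ih =>
      intro j hj
      calc symbPow P (j + (k + 1)) = symbPow P ((j + k) + 1) := by ring_nf
        _ ≤ M * symbPow P (j + k) := h1 (j + k) (le_trans hj (Nat.le_add_right _ _))
        _ ≤ M * (M ^ k * symbPow P j) := Ideal.mul_mono_right (ih j hj)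
        _ = M ^ (k + 1) * symbPow P j := by ring
  rcases Nat.even_or_odd m with ⟨s, hs⟩ | ⟨s, hs⟩
  · -- m = s + s, even case
    have hs1 : 1 ≤ s := by omega
    have hts : 1 ≤ t * s := Nat.one_le_iff_ne_zero.2 (by positivity)
    have e1 : symbPow P (t * m) = symbPow P m ^ t := by
      have e2 : symbPow P (t * m) = symbPow P 2 ^ (t * s) := by
        rw [show t * m = 2 * (t * s) by subst hs; ring]; exact h2 (t * s) hts
      have e3 : symbPow P m = symbPow P 2 ^ s := by
        rw [show m = 2 * s by omega]; exact h2 s hs1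
      rw [e2, e3, ← pow_mul, mul_comm s t]
    calc symbPow P (t * (m + 1)) = symbPow P (t * m + t) := by ring_nf
      _ ≤ M ^ t * symbPow P (t * m) := key t (t * m) (le_trans hm (Nat.le_mul_of_pos_left m ht))
      _ = M ^ t * symbPow P m ^ t := by rw [e1]
  · -- m = 2 * s + 1, odd case
    have e1 : symbPow P (t * (m + 1)) = symbPow P (m + 1) ^ t := by
      have e2 : symbPow P (t * (m + 1)) = symbPow P 2 ^ (t * (s + 1)) := by
        rw [show t * (m + 1) = 2 * (t * (s + 1)) by subst hs; ring]
        exact h2 (t * (s + 1)) (Nat.one_le_iff_ne_zero.2 (by positivity))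
      have e3 : symbPow P (m + 1) = symbPow P 2 ^ (s + 1) := by
        rw [show m + 1 = 2 * (s + 1) by omega]; exact h2 (s + 1) (by omega)
      rw [e2, e3, ← pow_mul, mul_comm (s + 1) t]
    calc symbPow P (t * (m + 1)) = symbPow P (m + 1) ^ t := e1
      _ ≤ (M * symbPow P m) ^ t := Ideal.pow_right_mono (h1 m hm) t
      _ = M ^ t * symbPow P m ^ t := mul_pow _ _ _
end
end

section
/- Let I ⊆ K[x_0, x_1, x_2] be the radical ideal of a finite set of distinct points in P^2 such that I^{(j+1)} ⊆ M · I^{(j)} and I^{(2j)} = (I^{(2)})^j for all j ≥ 1. Then I^{(t(m+1)−1)} ⊆ M^{t−1} (I^{(m)})^t holds for all integers t ≥ 1 and all even integers m ≥ 2. -/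
open MvPolynomial

noncomputable section

/-- If `I^{(j+1)} ⊆ M·I^{(j)}` and `I^{(2j)} = (I^{(2)})^j` for all `j ≥ 1`,
then `I^{(t(m+1)-1)} ⊆ M^{t-1} (I^{(m)})^t` for all `t ≥ 1` and even `m ≥ 2`. -/
theorem stmt2 {K : Type*} [Field K] [IsAlgClosed K]
    {n : ℕ} (hn : 1 ≤ n)
    (P : Fin n → (Fin 3 → K)) (hP : ProjectivelyDistinct P)
    (h1 : ∀ j : ℕ, 1 ≤ j → symbPow P (j + 1) ≤ irrel K (Fin 3) * symbPow P j)
    (h2 : ∀ j : ℕ, 1 ≤ j → symbPow P (2 * j) = symbPow P 2 ^ j)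
    (t m : ℕ) (ht : 1 ≤ t) (hm : 2 ≤ m) (hme : Even m) :
    symbPow P (t * (m + 1) - 1) ≤ irrel K (Fin 3) ^ (t - 1) * symbPow P m ^ t := by
  obtain ⟨k, hk⟩ := hme
  have hm2 : m = 2 * k := by omega
  have hk1 : 1 ≤ k := by omega
  have hkt : 1 ≤ k * t := Nat.one_le_iff_ne_zero.mpr (by positivity)
  have key : ∀ s j : ℕ, 1 ≤ j → symbPow P (j + s) ≤ irrel K (Fin 3) ^ s * symbPow P j := by
    intro s
    induction s with
    | zero => intro j hj; simp
    | succ s ih =>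
      intro j hj
      calc symbPow P (j + (s + 1)) = symbPow P ((j + s) + 1) := by ring_nf
        _ ≤ irrel K (Fin 3) * symbPow P (j + s) := h1 (j + s) (by omega)
        _ ≤ irrel K (Fin 3) * (irrel K (Fin 3) ^ s * symbPow P j) :=
            Ideal.mul_mono_right (ih j hj)
        _ = irrel K (Fin 3) ^ (s + 1) * symbPow P j := by ring
  have harith : t * (m + 1) = 2 * (k * t) + t := by rw [hm2]; ring
  have heq : t * (m + 1) - 1 = 2 * (k * t) + (t - 1) := by omega
  have hpow : symbPow P (2 * (k * t)) = symbPow P m ^ t := by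
    rw [h2 (k * t) hkt, hm2, h2 k hk1, ← pow_mul]
  calc symbPow P (t * (m + 1) - 1) = symbPow P (2 * (k * t) + (t - 1)) := by rw [heq]
    _ ≤ irrel K (Fin 3) ^ (t - 1) * symbPow P (2 * (k * t)) :=
        key (t - 1) _ (by omega)
    _ = irrel K (Fin 3) ^ (t - 1) * symbPow P m ^ t := by rw [hpow]
end
end

section
/- Let I ⊆ K[x_0, x_1, x_2] be the radical ideal of a finite set of distinct points in P^2 such that I^{(j+1)} ⊆ M · I^{(j)} and I^{(2j)} = (I^{(2)})^j for all j ≥ 1, and moreover I^{(2j+1)} = (I^{(2)})^j · I for all j ≥ 0. Then I^{(t(m+1)−1)} ⊆ M^{t−1} (I^{(m)})^t holds for all integers t ≥ 1 and all odd integers m ≥ 1. -/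
open MvPolynomial

noncomputable section

/-- If `I^{(j+1)} ⊆ M·I^{(j)}` and `I^{(2j)} = (I^{(2)})^j` for all `j ≥ 1`,
and moreover `I^{(2j+1)} = (I^{(2)})^j · I` for all `j ≥ 0`, then
`I^{(t(m+1)-1)} ⊆ M^{t-1} (I^{(m)})^t` for all `t ≥ 1` and odd `m ≥ 1`. -/
theorem stmt3 {K : Type*} [Field K] [IsAlgClosed K]
    {n : ℕ} (hn : 1 ≤ n)
    (P : Fin n → (Fin 3 → K)) (hP : ProjectivelyDistinct P)
    (h1 : ∀ j : ℕ, 1 ≤ j → symbPow P (j + 1) ≤ irrel K (Fin 3) * symbPow P j)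
    (h2 : ∀ j : ℕ, 1 ≤ j → symbPow P (2 * j) = symbPow P 2 ^ j)
    (h3 : ∀ j : ℕ, symbPow P (2 * j + 1) = symbPow P 2 ^ j * symbPow P 1)
    (t m : ℕ) (ht : 1 ≤ t) (hm : 1 ≤ m) (hmo : Odd m) :
    symbPow P (t * (m + 1) - 1) ≤ irrel K (Fin 3) ^ (t - 1) * symbPow P m ^ t := by
  obtain ⟨k, hk⟩ := hmo
  set S2 := symbPow P 2 with hS2
  set I := symbPow P 1 with hI
  set M := irrel K (Fin 3) with hM
  have hm' : m = 2 * k + 1 := by omega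
  have he : t * (m + 1) = 2 * (k * t) + 2 * t := by rw [hm']; ring
  have hj : t * (m + 1) - 1 = 2 * (k * t + (t - 1)) + 1 := by omega
  rw [hj, h3, hm', h3]
  have h12 : S2 ≤ M * I := by
    have := h1 1 le_rfl
    simpa using this
  calc S2 ^ (k * t + (t - 1)) * I = S2 ^ (k * t) * (S2 ^ (t - 1) * I) := by
        rw [pow_add, mul_assoc]
    _ ≤ S2 ^ (k * t) * (M ^ (t - 1) * I ^ t) := by
        refine Ideal.mul_mono_right ?_
        have h4 : S2 ^ (t - 1) ≤ M ^ (t - 1) * I ^ (t - 1) := by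
          calc S2 ^ (t - 1) ≤ (M * I) ^ (t - 1) := Ideal.pow_right_mono h12 _
            _ = M ^ (t - 1) * I ^ (t - 1) := mul_pow _ _ _
        calc S2 ^ (t - 1) * I ≤ M ^ (t - 1) * I ^ (t - 1) * I :=
              Ideal.mul_mono_left h4
          _ = M ^ (t - 1) * I ^ t := by
              rw [mul_assoc, ← pow_succ]
              congr 2
              omega
    _ = M ^ (t - 1) * (S2 ^ k * I) ^ t := by
        rw [mul_pow, ← pow_mul]
        ring
end
end

section
/- With the hyperplane-section setup (points P_1, …, P_n in the hyperplane H: x_0 = 0 of P^{N+1}, with I their radical ideal in K[x_1, …, x_{N+1}] and Î their radical ideal in K[x_0, …, x_{N+1}]): if I^{(rN−(N−1))} ⊆ I^r holds for all integers r ≥ 1, then Î^{(r(N+1)−N)} ⊆ Î^{(rN−(N−1))} ⊆ Î^r holds for all integers r ≥ 1. -/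
open MvPolynomial

noncomputable section

/-!
Expand `F ∈ Î^{(m)}` in powers of `x₀` as `F = ∑ x₀ᵏ G_k` with `G_k ∈ K[x₁, …, x_{N+1}]`.
Since every `P_i` lies on `x₀ = 0`, `Î(P_i)` is generated by `I(P_i)` and `x₀`, so
`G_k ∈ I^{(m-k)}`. For `k ≥ r` the term `x₀ᵏ G_k` lies in `Î^r` because `x₀ ∈ Î`. For
`k < r` and `m = rN - (N-1)` we have `m - k ≥ (r-k)N - (N-1)`, so the hypothesis gives
`G_k ∈ I^{r-k}`, whence `x₀ᵏ G_k ∈ Î^k Î^{r-k}`. The first containment is monotonicity of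
symbolic powers.
-/

open Polynomial in
/-- This is the ideal `(A·R[X] + (X))^s`. -/
def Ideal.coeffPow {R : Type*} [CommRing R] (A : Ideal R) (s : ℕ) : Ideal R[X] where
  carrier := {f | ∀ k, f.coeff k ∈ A ^ (s - k)}
  zero_mem' k := by simp
  add_mem' hf hg k := by simpa [Polynomial.coeff_add] using add_mem (hf k) (hg k)
  smul_mem' c f hf k := by
    rw [smul_eq_mul, Polynomial.coeff_mul]
    refine Ideal.sum_mem _ fun x hx => ?_
    have hxk : x.1 + x.2 = k := Finset.HasAntidiagonal.mem_antidiagonal.mp hx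
    exact Ideal.mul_mem_left _ _ (Ideal.pow_le_pow_right (by omega) (hf x.2))

namespace Ideal

variable {R : Type*} [CommRing R] (A : Ideal R)

theorem coeffPow_mul_coeffPow_le (s t : ℕ) : coeffPow A s * coeffPow A t ≤ coeffPow A (s + t) := by
  rw [Ideal.mul_le]
  intro f hf g hg k
  rw [Polynomial.coeff_mul]
  refine Ideal.sum_mem _ fun x hx => ?_
  have hxk : x.1 + x.2 = k := Finset.HasAntidiagonal.mem_antidiagonal.mp hx
  have hprod : f.coeff x.1 * g.coeff x.2 ∈ A ^ ((s - x.1) + (t - x.2)) := by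
    rw [pow_add]; exact Ideal.mul_mem_mul (hf x.1) (hg x.2)
  exact Ideal.pow_le_pow_right (by omega) hprod

theorem pow_le_coeffPow {J : Ideal (Polynomial R)} (hJ : J ≤ coeffPow A 1) (m : ℕ) :
    J ^ m ≤ coeffPow A m := by
  induction m with
  | zero => intro f _ k; simp
  | succ m ih =>
    calc J ^ (m + 1) = J ^ m * J := pow_succ J m
      _ ≤ coeffPow A m * coeffPow A 1 := Ideal.mul_mono ih hJ
      _ ≤ coeffPow A (m + 1) := coeffPow_mul_coeffPow_le A m 1

end Ideal

section Points

variable {K σ τ ι : Type*} [Field K]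

theorem X_mem_homVanishingIdeal {p : σ → K} {j : σ} (hj : p j = 0) :
    X j ∈ homVanishingIdeal p :=
  Ideal.subset_span ⟨⟨1, isHomogeneous_X _ _⟩, by simp [hj]⟩

theorem map_rename_homVanishingIdeal_le (f : σ → τ) (p : τ → K) :
    (homVanishingIdeal (p ∘ f)).map (rename f) ≤ homVanishingIdeal p := by
  rw [homVanishingIdeal, Ideal.map_span, Ideal.span_le]
  rintro _ ⟨G, ⟨⟨d, hd⟩, hG⟩, rfl⟩
  exact Ideal.subset_span ⟨⟨d, hd.rename_isHomogeneous⟩, by rwa [eval_rename]⟩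

theorem symbPow_antitone (P : ι → σ → K) : Antitone (symbPow P) :=
  fun _ _ hab => iInf_mono fun _ => Ideal.pow_le_pow_right hab

theorem map_rename_symbPow_le (f : σ → τ) (P : ι → τ → K) (m : ℕ) :
    (symbPow (fun i => P i ∘ f) m).map (rename f) ≤ symbPow P m := by
  refine le_iInf fun i => (Ideal.map_mono (iInf_le _ i)).trans ?_
  rw [Ideal.map_pow]
  exact Ideal.pow_right_mono (map_rename_homVanishingIdeal_le f (P i)) m

end Points

section FinSucc

variable {K : Type*} [Field K] {n : ℕ}

theorem finSuccEquiv_rename_succ (g : MvPolynomial (Fin n) K) :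
    finSuccEquiv K n (rename Fin.succ g) = Polynomial.C g := by
  induction g using MvPolynomial.induction_on with
  | C a => simp [finSuccEquiv_apply]
  | add p q hp hq => simp [hp, hq]
  | mul_X p j hp => simp [hp, finSuccEquiv_X_succ]

theorem sum_X_zero_pow_mul_rename_coeff_finSuccEquiv (F : MvPolynomial (Fin (n + 1)) K) :
    ∑ k ∈ Finset.range ((finSuccEquiv K n F).natDegree + 1),
      X 0 ^ k * rename Fin.succ ((finSuccEquiv K n F).coeff k) = F := by
  apply (finSuccEquiv K n).injective
  conv_rhs => rw [(finSuccEquiv K n F).as_sum_range_C_mul_X_pow]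
  simp only [map_sum, map_mul, map_pow, finSuccEquiv_rename_succ, finSuccEquiv_X_zero, mul_comm]

theorem map_finSuccEquiv_homVanishingIdeal_le {p : Fin (n + 1) → K} (hp : p 0 = 0) :
    (homVanishingIdeal p).map (finSuccEquiv K n) ≤
      (homVanishingIdeal (Fin.tail p)).coeffPow 1 := by
  rw [homVanishingIdeal, Ideal.map_span, Ideal.span_le]
  rintro _ ⟨G, ⟨⟨d, hd⟩, hG⟩, rfl⟩ (_ | k)
  · rw [pow_one]
    refine Ideal.subset_span ⟨⟨d, hd.finSuccEquiv_coeff_isHomogeneous 0 d (zero_add d)⟩, ?_⟩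
    have hcons : Fin.cons 0 (Fin.tail p) = p := by rw [← hp, Fin.cons_self_tail]
    have heval := eval_eq_eval_mv_eval' (Fin.tail p) 0 G
    rwa [hcons, hG, ← Polynomial.coeff_zero_eq_eval_zero, Polynomial.coeff_map, eq_comm] at heval
  · simp

theorem coeff_finSuccEquiv_mem_symbPow {ι : Type*} {P : ι → Fin (n + 1) → K}
    (hP : ∀ i, P i 0 = 0) {m : ℕ} {F : MvPolynomial (Fin (n + 1)) K} (hF : F ∈ symbPow P m)
    (k : ℕ) : (finSuccEquiv K n F).coeff k ∈ symbPow (fun i => Fin.tail (P i)) (m - k) := by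
  refine Ideal.mem_iInf.mpr fun i => ?_
  have hmap : finSuccEquiv K n F ∈ ((homVanishingIdeal (P i)).map (finSuccEquiv K n)) ^ m := by
    rw [← Ideal.map_pow]
    exact Ideal.mem_map_of_mem _ (Ideal.mem_iInf.mp hF i)
  exact Ideal.pow_le_coeffPow _ (map_finSuccEquiv_homVanishingIdeal_le (hP i)) m hmap k

theorem symbPow_le_pow_of_tail {ι : Type*} {N : ℕ} (hN : 1 ≤ N) {P : ι → Fin (n + 1) → K}
    (hP : ∀ i, P i 0 = 0)
    (h : ∀ r : ℕ, 1 ≤ r → symbPow (fun i => Fin.tail (P i)) (r * N - (N - 1)) ≤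
      symbPow (fun i => Fin.tail (P i)) 1 ^ r) (r : ℕ) :
    symbPow P (r * N - (N - 1)) ≤ symbPow P 1 ^ r := by
  intro F hF
  rw [← sum_X_zero_pow_mul_rename_coeff_finSuccEquiv F]
  refine Ideal.sum_mem _ fun k _ => ?_
  have hX : (X 0 : MvPolynomial (Fin (n + 1)) K) ∈ symbPow P 1 :=
    Ideal.mem_iInf.mpr fun i => by rw [pow_one]; exact X_mem_homVanishingIdeal (hP i)
  rcases le_or_gt r k with hrk | hkr
  · rw [← Nat.sub_add_cancel hrk, pow_add, mul_assoc]
    exact Ideal.mul_mem_left _ _ (Ideal.mul_mem_right _ _ (Ideal.pow_mem_pow hX r))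
  · have hexp : (r - k) * N - (N - 1) ≤ r * N - (N - 1) - k := by
      have : k ≤ k * N := Nat.le_mul_of_pos_right k hN
      rw [Nat.sub_mul]
      omega
    have hcoeff := h (r - k) (by omega)
      (symbPow_antitone _ hexp (coeff_finSuccEquiv_mem_symbPow hP hF k))
    have hrename : rename Fin.succ ((finSuccEquiv K n F).coeff k) ∈ symbPow P 1 ^ (r - k) := by
      have := Ideal.mem_map_of_mem (rename (R := K) Fin.succ) hcoeff
      rw [Ideal.map_pow] at this
      exact Ideal.pow_right_mono (map_rename_symbPow_le Fin.succ P 1) (r - k) this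
    rw [← Nat.add_sub_cancel' hkr.le, pow_add]
    exact Ideal.mul_mem_mul (Ideal.pow_mem_pow hX k) hrename

end FinSucc

theorem stmt14_general {K : Type*} [Field K]
    {N n : ℕ} (hN : 1 ≤ N)
    (P : Fin n → (Fin (N + 2) → K))
    (hinH : ∀ i, P i 0 = 0)
    (h : ∀ r : ℕ, 1 ≤ r →
      symbPow (fun i (j : Fin (N + 1)) => P i j.succ) (r * N - (N - 1)) ≤
        symbPow (fun i (j : Fin (N + 1)) => P i j.succ) 1 ^ r) :
    ∀ r : ℕ, 1 ≤ r →
      symbPow P (r * (N + 1) - N) ≤ symbPow P (r * N - (N - 1)) ∧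
      symbPow P (r * N - (N - 1)) ≤ symbPow P 1 ^ r := by
  intro r hr
  have hexp : r * N - (N - 1) ≤ r * (N + 1) - N := by rw [mul_add_one]; omega
  exact ⟨symbPow_antitone P hexp, symbPow_le_pow_of_tail hN hinH h r⟩

/-- Hyperplane section.  If `I^{(rN-(N-1))} ⊆ I^r` holds for all `r ≥ 1`
in `K[x_1,…,x_{N+1}]`, then `Î^{(r(N+1)-N)} ⊆ Î^{(rN-(N-1))} ⊆ Î^r` holds for all
`r ≥ 1` in `K[x_0,…,x_{N+1}]`. -/
theorem stmt14 {K : Type*} [Field K] [IsAlgClosed K]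
    {N n : ℕ} (hN : 1 ≤ N) (hn : 1 ≤ n)
    (P : Fin n → (Fin (N + 2) → K)) (hP : ProjectivelyDistinct P)
    (hinH : ∀ i, P i 0 = 0)
    (h : ∀ r : ℕ, 1 ≤ r →
      symbPow (fun i (j : Fin (N + 1)) => P i j.succ) (r * N - (N - 1)) ≤
        symbPow (fun i (j : Fin (N + 1)) => P i j.succ) 1 ^ r) :
    ∀ r : ℕ, 1 ≤ r →
      symbPow P (r * (N + 1) - N) ≤ symbPow P (r * N - (N - 1)) ∧
      symbPow P (r * N - (N - 1)) ≤ symbPow P 1 ^ r :=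
  stmt14_general hN P hinH h
end
end
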